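/- arXiv:2103.02722 — 3 statements merged into one kernel-verified Lean document; each statement's English description precedes it below -/
import Mathlib

section
/- Let f(x) = α e^{Tx} s be the density of a matrix-exponential distribution with parameters (α, T, s), where all eigenvalues of T have strictly negative real part, and let λ ≥ 0. Then the exponentially tilted density f_λ(x) = e^{-λx} f(x) / ∫₀^∞ e^{-λr} f(r) dr equals (α / (α(λI−T)^{-1}s)) e^{(T−λI)x} s; in particular f_λ is again a matrix-exponential density, with parameters (α/(α(λI−T)^{-1}s), T−λI, s). -/
/-!
Put `A = T - λI`. Tilting multiplies `α e^{Tx} s` by the scalar `e^{-λx}`, which turns it into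
`α e^{xA} s`, so everything reduces to `∫₀^∞ e^{tA} dt = (-A)⁻¹`: the fundamental theorem of
calculus for `d/dt e^{tA} = e^{tA} A`, once `e^{tA}` is known to decay exponentially.
The eigenvalues of `A` are those of `T` shifted by `-λ`, so they lie in the open left half-plane.
Every eigenvalue of `e^A` is `e^μ` for such a `μ`, so the spectral radius of `e^A` is below `1`;
Gelfand's formula makes the powers `(e^A)^n` decay geometrically, and writing `t` as its integer
part plus a fractional part in `[0, 1)` gives the decay of `e^{tA}`.
-/

open scoped Matrix Pointwise
open MeasureTheory Filter Topology Asymptotics NormedSpace Set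

theorem exists_isBigO_pow_of_spectralRadius_lt_one {𝔹 : Type*} [NormedRing 𝔹]
    [NormedAlgebra ℂ 𝔹] [CompleteSpace 𝔹] {b : 𝔹} (h : spectralRadius ℂ b < 1) :
    ∃ c > 0, (fun n : ℕ => b ^ n) =O[atTop] fun n => Real.exp (-c * n) := by
  obtain ⟨r, -, hbr, hr1⟩ := ENNReal.lt_iff_exists_real_btwn.1 h
  have hr0 : 0 < r := ENNReal.ofReal_pos.1 (pos_of_gt hbr)
  refine ⟨-Real.log r, neg_pos.2 (Real.log_neg hr0 (ENNReal.ofReal_lt_one.1 hr1)), ?_⟩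
  refine IsBigO.of_bound 1 ?_
  filter_upwards [(spectrum.pow_norm_pow_one_div_tendsto_nhds_spectralRadius b).eventually
    (gt_mem_nhds hbr), eventually_ge_atTop 1] with n hn hn1
  rw [ENNReal.ofReal_lt_ofReal_iff hr0, one_div, Real.rpow_inv_lt_iff_of_pos (norm_nonneg _)
    hr0.le (Nat.cast_pos.2 hn1), Real.rpow_def_of_pos hr0] at hn
  simpa [mul_comm] using hn.le

section RealBanachAlgebra

variable {𝔸 : Type*} [NormedRing 𝔸] [NormedAlgebra ℝ 𝔸] [CompleteSpace 𝔸]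

theorem exp_smul_sub_smul_one (a : 𝔸) (c t : ℝ) :
    exp (t • (a - c • 1)) = Real.exp (-c * t) • exp (t • a) := by
  let +nondep : NormedAlgebra ℚ 𝔸 := .restrictScalars ℚ ℝ 𝔸
  have hsplit : t • (a - c • 1) = algebraMap ℝ 𝔸 (-c * t) + t • a := by
    rw [Algebra.algebraMap_eq_smul_one]
    module
  rw [hsplit, exp_add_of_commute (Algebra.commutes _ _), ← algebraMap_exp_comm,
    ← Real.exp_eq_exp_ℝ, ← Algebra.smul_def]

theorem isBigO_exp_smul_of_isBigO_exp_pow {a : 𝔸} {c : ℝ} (hc : 0 ≤ c)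
    (h : (fun n : ℕ => exp a ^ n) =O[atTop] fun n => Real.exp (-c * n)) :
    (fun t : ℝ => exp (t • a)) =O[atTop] fun t => Real.exp (-c * t) := by
  let +nondep : NormedAlgebra ℚ 𝔸 := .restrictScalars ℚ ℝ 𝔸
  have hsplit (t : ℝ) : exp (t • a) = exp ((t - ⌊t⌋₊) • a) * exp a ^ ⌊t⌋₊ := by
    rw [← exp_nsmul, ← Nat.cast_smul_eq_nsmul ℝ, ← exp_add_of_commute
      (((Commute.refl a).smul_left _).smul_right _), ← add_smul, sub_add_cancel]
  obtain ⟨C, hC⟩ := isCompact_Icc.exists_bound_of_continuousOn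
    (exp_continuous.comp (continuous_id.smul continuous_const) : Continuous fun u : ℝ =>
      exp (u • a)).continuousOn (s := Icc 0 1)
  have hfract : (fun t : ℝ => exp ((t - ⌊t⌋₊) • a)) =O[atTop] fun _ => (1 : ℝ) := by
    refine IsBigO.of_bound C ?_
    filter_upwards [eventually_ge_atTop 0] with t ht
    simpa using hC _ ⟨sub_nonneg.2 (Nat.floor_le ht), by linarith [Nat.lt_floor_add_one t]⟩
  have hfloor : (fun t : ℝ => Real.exp (-c * ⌊t⌋₊)) =O[atTop] fun t => Real.exp (-c * t) := by
    refine IsBigO.of_bound (Real.exp c) (Eventually.of_forall fun t => ?_)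
    simp only [Real.norm_eq_abs, Real.abs_exp, ← Real.exp_add]
    exact Real.exp_le_exp.2 (by nlinarith [Nat.sub_one_lt_floor t])
  have hprod := hfract.mul ((h.comp_tendsto tendsto_nat_floor_atTop).trans hfloor)
  simp only [one_mul] at hprod
  exact hprod.congr_left fun t => (hsplit t).symm

theorem integrableOn_exp_smul_of_isBigO {a : 𝔸} {c : ℝ} (hc : 0 < c)
    (h : (fun t : ℝ => exp (t • a)) =O[atTop] fun t => Real.exp (-c * t)) :
    IntegrableOn (fun t : ℝ => exp (t • a)) (Ioi 0) := by
  let +nondep : NormedAlgebra ℚ 𝔸 := .restrictScalars ℚ ℝ 𝔸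
  have hcont : Continuous fun t : ℝ => exp (t • a) :=
    exp_continuous.comp (continuous_id.smul continuous_const)
  exact (integrableOn_Ici_iff_integrableOn_Ioi (by finiteness)).mp <|
    (hcont.continuousOn.locallyIntegrableOn measurableSet_Ici).integrableOn_of_isBigO_atTop h
      ⟨Ioi 0, Ioi_mem_atTop 0, exp_neg_integrableOn_Ioi 0 hc⟩

theorem integral_exp_smul_mul_neg {a : 𝔸} {c : ℝ} (hc : 0 < c)
    (h : (fun t : ℝ => exp (t • a)) =O[atTop] fun t => Real.exp (-c * t)) :
    (∫ t in Ioi (0 : ℝ), exp (t • a)) * -a = 1 := by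
  have hint := integrableOn_exp_smul_of_isBigO hc h
  have hlim : Tendsto (fun t : ℝ => exp (t • a)) atTop (𝓝 0) :=
    h.trans_tendsto <| Real.tendsto_exp_atBot.comp <|
      tendsto_id.const_mul_atTop_of_neg (neg_lt_zero.2 hc)
  have hFTC := integral_Ioi_of_hasDerivAt_of_tendsto' (fun t _ => hasDerivAt_exp_smul_const a t)
    (hint.mul_const a) hlim
  rw [mul_neg, ← integral_mul_const_of_integrable hint, hFTC]
  simp

end RealBanachAlgebra

section MatrixExp

attribute [local instance] Matrix.frobeniusNormedRing Matrix.frobeniusNormedAlgebra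

namespace Matrix

variable {n : Type*} [Fintype n] [DecidableEq n]

theorem exp_mulVec_of_mulVec_eq_smul {𝕂 : Type*} [RCLike 𝕂] {M : Matrix n n 𝕂} {v : n → 𝕂}
    {μ : 𝕂} (h : M *ᵥ v = μ • v) : exp M *ᵥ v = exp μ • v := by
  have hpow (k : ℕ) : M ^ k *ᵥ v = μ ^ k • v := by
    induction k with
    | zero => simp
    | succ k ih => rw [pow_succ', ← mulVec_mulVec, ih, mulVec_smul, h, smul_smul, pow_succ]
  have hM := (exp_series_hasSum_exp' (𝕂 := 𝕂) M).map (mulVec.addMonoidHomLeft v)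
    (continuous_id.matrix_mulVec continuous_const)
  refine hM.unique ((exp_series_hasSum_exp' (𝕂 := 𝕂) μ).smul_const v |>.congr_fun fun k => ?_)
  change ((k.factorial : 𝕂)⁻¹ • M ^ k) *ᵥ v = _
  rw [smul_mulVec, hpow, smul_smul, smul_eq_mul]

theorem spectrum_exp_subset (M : Matrix n n ℂ) :
    spectrum ℂ (exp M) ⊆ Complex.exp '' spectrum ℂ M := by
  intro ν hν
  rw [← spectrum_toLin', ← Module.End.hasEigenvalue_iff_mem_spectrum] at hν
  have : Nontrivial (Module.End.eigenspace (toLin' (exp M)) ν) :=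
    Submodule.nontrivial_iff_ne_bot.2 hν
  -- `M` preserves the `ν`-eigenspace of `exp M`, so it has an eigenvector `w` there.
  have hmaps := Module.End.mapsTo_genEigenspace_of_comm (f := toLin' (exp M)) (g := toLin' M)
    ((Commute.refl M).exp_right.symm.map toLinAlgEquiv') ν 1
  obtain ⟨μ, hμ⟩ := Module.End.exists_eigenvalue ((toLin' M).restrict hmaps)
  obtain ⟨w, hw⟩ := hμ.exists_hasEigenvector
  have hw0 : (w : n → ℂ) ≠ 0 := by simpa using hw.2
  have hMw : M *ᵥ (w : n → ℂ) = μ • w := congrArg Subtype.val hw.apply_eq_smul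
  have hexp : exp M *ᵥ (w : n → ℂ) = ν • w := by
    simpa using Module.End.mem_eigenspace_iff.1 w.2
  refine ⟨μ, ?_, ?_⟩
  · rw [← spectrum_toLin', ← Module.End.hasEigenvalue_iff_mem_spectrum]
    exact Module.End.hasEigenvalue_of_hasEigenvector
      ⟨Module.End.mem_eigenspace_iff.2 (by simpa using hMw), hw0⟩
  · rw [Complex.exp_eq_exp_ℂ]
    exact smul_left_injective ℂ hw0 ((exp_mulVec_of_mulVec_eq_smul hMw).symm.trans hexp)

theorem spectralRadius_exp_lt_one {M : Matrix n n ℂ} (hM : ∀ μ ∈ spectrum ℂ M, μ.re < 0) :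
    spectralRadius ℂ (exp M) < 1 := by
  rcases (spectrum ℂ (exp M)).eq_empty_or_nonempty with h | h
  · simp [spectralRadius, h]
  obtain ⟨ν, hν, hνr⟩ := spectrum.exists_nnnorm_eq_spectralRadius_of_nonempty h
  obtain ⟨μ, hμ, rfl⟩ := spectrum_exp_subset M hν
  rw [← hνr, ENNReal.coe_lt_one_iff, ← NNReal.coe_lt_one, coe_nnnorm, Complex.norm_exp]
  exact Real.exp_lt_one_iff.2 (hM μ hμ)

theorem exists_isBigO_exp_smul {A : Matrix n n ℝ}
    (hA : ∀ μ ∈ spectrum ℂ (A.map (algebraMap ℝ ℂ)), μ.re < 0) :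
    ∃ c > 0, (fun t : ℝ => exp (t • A)) =O[atTop] fun t => Real.exp (-c * t) := by
  obtain ⟨c, hc, hpow⟩ :=
    exists_isBigO_pow_of_spectralRadius_lt_one (𝔹 := Matrix n n ℂ) (spectralRadius_exp_lt_one hA)
  refine ⟨c, hc, ?_⟩
  have hmap (t : ℝ) : (exp (t • A)).map (algebraMap ℝ ℂ) = exp (t • A.map (algebraMap ℝ ℂ)) := by
    have := map_exp ((Algebra.ofId ℝ ℂ).mapMatrix (m := n))
      (continuous_id.matrix_map (continuous_algebraMap ℝ ℂ)) (t • A)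
    rwa [map_smul] at this
  rw [← isBigO_norm_left]
  simp_rw [← frobenius_norm_map_eq (exp _) (algebraMap ℝ ℂ) (fun a => by simp), hmap]
  exact (isBigO_exp_smul_of_isBigO_exp_pow hc.le hpow).norm_left

theorem integral_dotProduct_exp_smul_mulVec {A : Matrix n n ℝ}
    (hA : ∀ μ ∈ spectrum ℂ (A.map (algebraMap ℝ ℂ)), μ.re < 0) (v w : n → ℝ) :
    ∫ t in Ioi (0 : ℝ), v ⬝ᵥ exp (t • A) *ᵥ w = v ⬝ᵥ (-A)⁻¹ *ᵥ w := by
  obtain ⟨c, hc, hdecay⟩ := exists_isBigO_exp_smul hA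
  have hinv : ∫ t in Ioi (0 : ℝ), exp (t • A) = (-A)⁻¹ :=
    (inv_eq_left_inv (integral_exp_smul_mul_neg hc hdecay)).symm
  let L : Matrix n n ℝ →ₗ[ℝ] ℝ :=
    { toFun := fun M => v ⬝ᵥ M *ᵥ w
      map_add' := fun M N => by simp [add_mulVec, dotProduct_add]
      map_smul' := fun r M => by simp [smul_mulVec, dotProduct_smul] }
  rw [← hinv]
  exact (LinearMap.toContinuousLinearMap L).integral_comp_comm
    (integrableOn_exp_smul_of_isBigO hc hdecay)

theorem exp_smul_sub_smul_one (A : Matrix n n ℝ) (c t : ℝ) :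
    exp (t • (A - c • 1)) = Real.exp (-c * t) • exp (t • A) :=
  _root_.exp_smul_sub_smul_one A c t

theorem spectrum_map_sub_smul_one (A : Matrix n n ℝ) (c : ℝ) :
    spectrum ℂ ((A - c • 1).map (algebraMap ℝ ℂ)) =
      spectrum ℂ (A.map (algebraMap ℝ ℂ)) - ({(c : ℂ)} : Set ℂ) := by
  rw [spectrum.sub_singleton_eq]
  congr 1
  ext i j
  by_cases h : i = j <;> simp [algebraMap_matrix_apply, h]

end Matrix

end MatrixExp

theorem stmt1_general (p : ℕ) (T : Matrix (Fin p) (Fin p) ℝ)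
    (hT : ∀ μ ∈ spectrum ℂ (T.map (algebraMap ℝ ℂ)), μ.re < 0)
    (lam : ℝ) (hlam : 0 ≤ lam) (α s : Fin p → ℝ)
    (f : ℝ → ℝ) (hf : ∀ x, f x = α ⬝ᵥ (NormedSpace.exp (x • T)).mulVec s) :
    ∀ x, 0 ≤ x →
      Real.exp (-lam * x) * f x / (∫ r in Set.Ioi (0 : ℝ), Real.exp (-lam * r) * f r)
        = ((α ⬝ᵥ (lam • (1 : Matrix (Fin p) (Fin p) ℝ) - T)⁻¹.mulVec s)⁻¹ • α) ⬝ᵥ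
            (NormedSpace.exp (x • (T - lam • (1 : Matrix (Fin p) (Fin p) ℝ)))).mulVec s := by
  intro x _
  have hshift : ∀ μ ∈ spectrum ℂ ((T - lam • 1).map (algebraMap ℝ ℂ)), μ.re < 0 := by
    rw [Matrix.spectrum_map_sub_smul_one]
    rintro _ ⟨μ, hμ, _, rfl, rfl⟩
    simpa using (hT μ hμ).trans_le hlam
  have htilt (t : ℝ) : Real.exp (-lam * t) * f t = α ⬝ᵥ exp (t • (T - lam • 1)) *ᵥ s := by
    rw [hf, Matrix.exp_smul_sub_smul_one, Matrix.smul_mulVec, dotProduct_smul, smul_eq_mul]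
  have hZ : ∫ r in Ioi (0 : ℝ), Real.exp (-lam * r) * f r = α ⬝ᵥ (lam • 1 - T)⁻¹ *ᵥ s := by
    simp_rw [htilt]
    rw [Matrix.integral_dotProduct_exp_smul_mulVec hshift, neg_sub]
  rw [htilt, hZ, smul_dotProduct, smul_eq_mul, div_eq_inv_mul]

/-- The exponential tilting of a matrix-exponential density f(x) = α e^{Tx} s is again
matrix-exponential, with parameters (α / (α(λI−T)⁻¹s), T − λI, s). -/
theorem stmt1 (p : ℕ) (T : Matrix (Fin p) (Fin p) ℝ)
    (hT : ∀ μ ∈ spectrum ℂ (T.map (algebraMap ℝ ℂ)), μ.re < 0)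
    (lam : ℝ) (hlam : 0 ≤ lam) (α s : Fin p → ℝ)
    (f : ℝ → ℝ) (hf : ∀ x, f x = α ⬝ᵥ (NormedSpace.exp (x • T)).mulVec s)
    (hZ : 0 < ∫ r in Set.Ioi (0 : ℝ), Real.exp (-lam * r) * f r) :
    ∀ x, 0 ≤ x →
      Real.exp (-lam * x) * f x / (∫ r in Set.Ioi (0 : ℝ), Real.exp (-lam * r) * f r)
        = ((α ⬝ᵥ (lam • (1 : Matrix (Fin p) (Fin p) ℝ) - T)⁻¹.mulVec s)⁻¹ • α) ⬝ᵥ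
            (NormedSpace.exp (x • (T - lam • (1 : Matrix (Fin p) (Fin p) ℝ)))).mulVec s :=
  stmt1_general p T hT lam hlam α s f hf
end

section
/- Let (α, T, s) be real matrix-exponential parameters of dimension p with T = T⁺ − T⁻ the sign decomposition (T⁺ with nonnegative off-diagonal and nonpositive diagonal entries, T⁻ nonnegative) and s = s⁺ − s⁻ with s⁺, s⁻ ≥ 0. Then for every λ ≥ 0, every x ≥ 0 and every i ∈ {1,…,p}: e_iᵀ e^{(T−λI)x} s = (e_iᵀ, 0) exp([[T⁺−λI, T⁻],[T⁻, T⁺−λI]] x) [s; −s], and −e_iᵀ e^{(T−λI)x} s = (0, e_iᵀ) exp([[T⁺−λI, T⁻],[T⁻, T⁺−λI]] x) [s; −s]. -/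
/-!
The block matrix `[[A, B], [B, A]]` maps `[v; -v]` to `[(A - B) v; -((A - B) v)]`, i.e. it is
intertwined with `A - B` by the column matrix `[1; -1]`. Intertwining passes to every power and
hence to the exponential series. With `A = x (T⁺ - λ I)` and `B = x T⁻` one has
`A - B = x (T - λ I)`, and the two identities are the two halves of the resulting vector.
-/

open scoped Matrix

namespace Matrix

open NormedSpace

variable {𝕂 m n : Type*} [RCLike 𝕂] [Fintype m] [DecidableEq m] [Fintype n] [DecidableEq n]

theorem pow_mul_eq_mul_pow_of_mul_eq {α : Type*} [Semiring α] {M : Matrix m m α}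
    {N : Matrix n n α} {J : Matrix m n α}
    (h : M * J = J * N) (k : ℕ) : M ^ k * J = J * N ^ k := by
  induction k with
  | zero => simp
  | succ k ih =>
    rw [pow_succ, Matrix.mul_assoc, h, ← Matrix.mul_assoc, ih, Matrix.mul_assoc, ← pow_succ]

open scoped Norms.Operator in
theorem exp_mul_eq_mul_exp_of_mul_eq {M : Matrix m m 𝕂} {N : Matrix n n 𝕂} {J : Matrix m n 𝕂}
    (h : M * J = J * N) : exp M * J = J * exp N := by
  let mulRight : Matrix m m 𝕂 →+ Matrix m n 𝕂 :=
    ⟨⟨(· * J), Matrix.zero_mul J⟩, fun A B => Matrix.add_mul A B J⟩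
  let mulLeft : Matrix n n 𝕂 →+ Matrix m n 𝕂 :=
    ⟨⟨(J * ·), Matrix.mul_zero J⟩, fun A B => Matrix.mul_add J A B⟩
  have hM := (exp_series_hasSum_exp' (𝕂 := 𝕂) M).map mulRight
    (continuous_id.matrix_mul continuous_const)
  have hN := (exp_series_hasSum_exp' (𝕂 := 𝕂) N).map mulLeft
    (continuous_const.matrix_mul continuous_id)
  refine hM.unique (hN.congr_fun fun k => ?_)
  simp [mulRight, mulLeft, pow_mul_eq_mul_pow_of_mul_eq h]

theorem exp_fromBlocks_mulVec_sumElim_neg (A B : Matrix n n 𝕂) (v : n → 𝕂) :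
    exp (fromBlocks A B B A) *ᵥ Sum.elim v (-v) =
      Sum.elim (exp (A - B) *ᵥ v) (-(exp (A - B) *ᵥ v)) := by
  have hJ : fromBlocks A B B A * (fromRows 1 (-1) : Matrix (n ⊕ n) n 𝕂) =
      (fromRows 1 (-1) : Matrix (n ⊕ n) n 𝕂) * (A - B) := by
    rw [fromBlocks_mul_fromRows, fromRows_mul]
    congr 1 <;> simp [sub_eq_add_neg]
  have hv : Sum.elim v (-v) = (fromRows 1 (-1) : Matrix (n ⊕ n) n 𝕂) *ᵥ v := by
    simp [fromRows_mulVec, neg_mulVec]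
  rw [hv, mulVec_mulVec, exp_mul_eq_mul_exp_of_mul_eq hJ, ← mulVec_mulVec]
  simp [fromRows_mulVec, neg_mulVec]

end Matrix

theorem stmt8_general (p : ℕ) (T Tp Tm : Matrix (Fin p) (Fin p) ℝ) (s : Fin p → ℝ)
    (hTdec : T = Tp - Tm)
    (lam : ℝ) (x : ℝ) (i : Fin p) :
    (Pi.single i 1) ⬝ᵥ
        (NormedSpace.exp (x • (T - lam • (1 : Matrix (Fin p) (Fin p) ℝ)))).mulVec s
      = (Sum.elim (Pi.single i 1) 0) ⬝ᵥ
          (NormedSpace.exp (x • Matrix.fromBlocks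
              (Tp - lam • (1 : Matrix (Fin p) (Fin p) ℝ)) Tm
              Tm (Tp - lam • (1 : Matrix (Fin p) (Fin p) ℝ)))).mulVec (Sum.elim s (-s)) ∧
    -((Pi.single i 1) ⬝ᵥ
        (NormedSpace.exp (x • (T - lam • (1 : Matrix (Fin p) (Fin p) ℝ)))).mulVec s)
      = (Sum.elim 0 (Pi.single i 1)) ⬝ᵥ
          (NormedSpace.exp (x • Matrix.fromBlocks
              (Tp - lam • (1 : Matrix (Fin p) (Fin p) ℝ)) Tm
              Tm (Tp - lam • (1 : Matrix (Fin p) (Fin p) ℝ)))).mulVec (Sum.elim s (-s)) := by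
  have hdiff : x • (Tp - lam • (1 : Matrix (Fin p) (Fin p) ℝ)) - x • Tm
      = x • (T - lam • (1 : Matrix (Fin p) (Fin p) ℝ)) := by
    rw [hTdec]; module
  rw [Matrix.fromBlocks_smul, Matrix.exp_fromBlocks_mulVec_sumElim_neg, hdiff]
  simp

/-- Theorem 1 identities: e_iᵀ e^{(T−λI)x} s = (e_iᵀ,0) e^{Gx} [s;−s] and
−e_iᵀ e^{(T−λI)x} s = (0,e_iᵀ) e^{Gx} [s;−s], where G = [[T⁺−λI,T⁻],[T⁻,T⁺−λI]]. -/
theorem stmt8 (p : ℕ) (T Tp Tm : Matrix (Fin p) (Fin p) ℝ) (s sp sm : Fin p → ℝ)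
    (hTdec : T = Tp - Tm)
    (hTpOff : ∀ i j, i ≠ j → 0 ≤ Tp i j) (hTpDiag : ∀ i, Tp i i ≤ 0)
    (hTm : ∀ i j, 0 ≤ Tm i j)
    (hsdec : s = sp - sm) (hsp : ∀ i, 0 ≤ sp i) (hsm : ∀ i, 0 ≤ sm i)
    (lam : ℝ) (hlam : 0 ≤ lam) (x : ℝ) (hx : 0 ≤ x) (i : Fin p) :
    (Pi.single i 1) ⬝ᵥ
        (NormedSpace.exp (x • (T - lam • (1 : Matrix (Fin p) (Fin p) ℝ)))).mulVec s
      = (Sum.elim (Pi.single i 1) 0) ⬝ᵥ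
          (NormedSpace.exp (x • Matrix.fromBlocks
              (Tp - lam • (1 : Matrix (Fin p) (Fin p) ℝ)) Tm
              Tm (Tp - lam • (1 : Matrix (Fin p) (Fin p) ℝ)))).mulVec (Sum.elim s (-s)) ∧
    -((Pi.single i 1) ⬝ᵥ
        (NormedSpace.exp (x • (T - lam • (1 : Matrix (Fin p) (Fin p) ℝ)))).mulVec s)
      = (Sum.elim 0 (Pi.single i 1)) ⬝ᵥ
          (NormedSpace.exp (x • Matrix.fromBlocks
              (Tp - lam • (1 : Matrix (Fin p) (Fin p) ℝ)) Tm
              Tm (Tp - lam • (1 : Matrix (Fin p) (Fin p) ℝ)))).mulVec (Sum.elim s (-s)) :=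
  stmt8_general p T Tp Tm s hTdec lam x i
end

section
/- Let α = (1, 0, 0), T = [[−1, −1, 2/3],[1, −1, −2/3],[0, 0, −1]], s = (4/3, 2/3, 1)ᵀ. Then for all x ≥ 0, α e^{Tx} s = (2/3) e^{−x} (1 + cos x). -/
/-!
Write `T = -1 + N` with `N = !![0, -1, 2/3; 1, 0, -2/3; 0, 0, 0]`. Then `N ^ 3 = -N`, so `N` acts
like an infinitesimal rotation and `exp (x • N) = 1 + sin x • N + (1 - cos x) • N ^ 2`: both sides
solve `y' = N y` with `y 0 = 1`. Since the scalar part commutes with `N`,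
`exp (x • T) = exp (-x) • exp (x • N)`, and evaluating at `α` and `s` gives the formula.
-/

open scoped Matrix
open NormedSpace

section BanachAlgebra

variable {𝔸 : Type*} [NormedRing 𝔸] [NormedAlgebra ℝ 𝔸] [CompleteSpace 𝔸]

theorem exp_smul_eq_of_hasDerivAt_mul (A : 𝔸) {g : ℝ → 𝔸}
    (hg : ∀ t, HasDerivAt g (A * g t) t) (hg₀ : g 0 = 1) (t : ℝ) :
    exp (t • A) = g t := by
  have hLip : LipschitzWith ‖ContinuousLinearMap.mul ℝ 𝔸 A‖₊ (A * ·) :=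
    (ContinuousLinearMap.mul ℝ 𝔸 A).lipschitz
  refine congrFun (ODE_solution_unique_univ (v := fun _ y ↦ A * y) (s := fun _ ↦ Set.univ)
    (t₀ := 0) (fun _ ↦ hLip.lipschitzOnWith) (fun t ↦ ⟨hasDerivAt_exp_smul_const' A t, trivial⟩)
    (fun t ↦ ⟨hg t, trivial⟩) ?_) t
  simp [hg₀]

theorem exp_smul_of_pow_three_eq_neg {N : 𝔸} (hN : N ^ 3 = -N) (t : ℝ) :
    exp (t • N) = 1 + Real.sin t • N + (1 - Real.cos t) • N ^ 2 := by
  refine exp_smul_eq_of_hasDerivAt_mul N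
    (g := fun t ↦ 1 + Real.sin t • N + (1 - Real.cos t) • N ^ 2) (fun t ↦ ?_) (by simp) t
  have hderiv := (((Real.hasDerivAt_sin t).smul_const N).const_add 1).add
    (((Real.hasDerivAt_cos t).const_sub 1).smul_const (N ^ 2))
  refine hderiv.congr_deriv ?_
  rw [mul_add, mul_add, mul_one, mul_smul_comm, mul_smul_comm, ← sq, ← pow_succ', hN]
  module

theorem exp_smul_algebraMap_add (c : ℝ) (N : 𝔸) (t : ℝ) :
    exp (t • (algebraMap ℝ 𝔸 c + N)) = Real.exp (t * c) • exp (t • N) := by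
  refine exp_smul_eq_of_hasDerivAt_mul _ (g := fun t ↦ Real.exp (t * c) • exp (t • N))
    (fun t ↦ ?_) (by simp) t
  have hderiv := (hasDerivAt_mul_const c).exp.smul (hasDerivAt_exp_smul_const' N t)
  refine hderiv.congr_deriv ?_
  rw [add_mul, Algebra.algebraMap_eq_smul_one, smul_mul_assoc, one_mul, mul_smul_comm]
  module

end BanachAlgebra

theorem Matrix.exp_smul_algebraMap_add_of_pow_three_eq_neg {n : Type*} [Fintype n]
    [DecidableEq n] (c : ℝ) {N : Matrix n n ℝ} (hN : N ^ 3 = -N) (t : ℝ) :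
    exp (t • (algebraMap ℝ _ c + N)) =
      Real.exp (t * c) • (1 + Real.sin t • N + (1 - Real.cos t) • N ^ 2) := by
  let _ : NormedRing (Matrix n n ℝ) := Matrix.linftyOpNormedRing
  let _ : NormedAlgebra ℝ (Matrix n n ℝ) := Matrix.linftyOpNormedAlgebra
  exact (exp_smul_algebraMap_add c N t).trans (congrArg _ (exp_smul_of_pow_three_eq_neg hN t))

noncomputable def rotationPart : Matrix (Fin 3) (Fin 3) ℝ := !![0, -1, 2/3; 1, 0, -2/3; 0, 0, 0]

theorem rotationPart_pow_three : rotationPart ^ 3 = -rotationPart := by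
  rw [rotationPart, pow_three, Matrix.mul_fin_three, Matrix.mul_fin_three, Matrix.neg_of]
  norm_num

/-- For the concrete parameters (α,T,s) of the example, α e^{Tx} s = (2/3)e^{−x}(1+cos x). -/
theorem stmt11 :
    ∀ x : ℝ, 0 ≤ x →
      (![1, 0, 0] : Fin 3 → ℝ) ⬝ᵥ
          (NormedSpace.exp (x • (!![(-1 : ℝ), -1, 2/3; 1, -1, -2/3; 0, 0, -1]))).mulVec
            (![4/3, 2/3, 1] : Fin 3 → ℝ)
        = (2/3) * Real.exp (-x) * (1 + Real.cos x) := by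
  intro x _
  have hT : !![(-1 : ℝ), -1, 2/3; 1, -1, -2/3; 0, 0, -1] =
      algebraMap ℝ _ (-1) + rotationPart := by
    ext i j
    fin_cases i <;> fin_cases j <;> norm_num [rotationPart, Matrix.algebraMap_eq_diagonal]
  rw [hT, Matrix.exp_smul_algebraMap_add_of_pow_three_eq_neg _ rotationPart_pow_three]
  simp [rotationPart, sq, Matrix.mulVec, dotProduct, Fin.sum_univ_three]
  ring
end
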